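/- arXiv:math-ph/0312055 — 5 statements merged into one kernel-verified Lean document; each statement's English description precedes it below -/
import Mathlib

section
/- For fixed α > 0 and a > 0, the function κ ↦ φ_a(κ) = (α/(4π)) ∫_{ℝ} e^{−2a√(p²+κ²)} / ((2√(p²+κ²) − α)·√(p²+κ²)) dp is strictly decreasing on (α/2, ∞). -/
open Real MeasureTheory Set Filter Topology

noncomputable def sBeta (β κ : ℝ) : ℝ :=
  β + (1 / (2 * π)) * (Real.log (κ / 2) + Real.eulerMascheroniConstant)

noncomputable def phiA (α a κ : ℝ) : ℝ :=
  (α / (4 * π)) * ∫ p : ℝ,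
    Real.exp (-2 * a * Real.sqrt (p ^ 2 + κ ^ 2)) /
      ((2 * Real.sqrt (p ^ 2 + κ ^ 2) - α) * Real.sqrt (p ^ 2 + κ ^ 2))

noncomputable def phi0 (α κ : ℝ) : ℝ :=
  (α / (4 * π)) * ∫ p : ℝ,
    1 / ((2 * Real.sqrt (p ^ 2 + κ ^ 2) - α) * Real.sqrt (p ^ 2 + κ ^ 2))

noncomputable def besselK0 (x : ℝ) : ℝ := ∫ t in Set.Ioi (0:ℝ), Real.exp (-x * Real.cosh t)

noncomputable def psiA (α a κ : ℝ) : ℝ :=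
  (α / π) * ∫ p in Set.Ioi (0:ℝ),
    p * Real.exp (-2 * a * Real.sqrt (p ^ 2 + κ ^ 2)) /
      ((2 * Real.sqrt (p ^ 2 + κ ^ 2) - α) * Real.sqrt (p ^ 2 + κ ^ 2))

noncomputable def psiC (α a κ : ℝ) : ℝ :=
  (α / π) * ∫ t in Set.Ioi κ, Real.exp (-2 * t * a) / (2 * t - α)

section aux

variable {α a : ℝ}

/-- sqrt (p^2 + κ^2) is at least κ when κ ≥ 0. -/
lemma sqrt_ge (κ p : ℝ) (hκ : 0 ≤ κ) : κ ≤ Real.sqrt (p ^ 2 + κ ^ 2) := by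
  nlinarith [Real.sq_sqrt (by positivity : (0:ℝ) ≤ p ^ 2 + κ ^ 2),
    Real.sqrt_nonneg (p ^ 2 + κ ^ 2), sq_nonneg p,
    sq_nonneg (Real.sqrt (p ^ 2 + κ ^ 2) - κ)]

lemma sqrt_ge_abs (κ p : ℝ) : |p| ≤ Real.sqrt (p ^ 2 + κ ^ 2) := by
  rw [← Real.sqrt_sq_eq_abs]
  exact Real.sqrt_le_sqrt (by nlinarith [sq_nonneg κ])

lemma integrand_cont (hα : 0 < α) {κ : ℝ} (hκ : α / 2 < κ) :
    Continuous (fun p : ℝ => Real.exp (-2 * a * Real.sqrt (p ^ 2 + κ ^ 2)) /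
      ((2 * Real.sqrt (p ^ 2 + κ ^ 2) - α) * Real.sqrt (p ^ 2 + κ ^ 2))) := by
  have hκ0 : 0 < κ := lt_trans (by positivity) hκ
  have hsc : Continuous fun p : ℝ => Real.sqrt (p ^ 2 + κ ^ 2) :=
    (continuous_pow 2 |>.add continuous_const).sqrt
  refine Continuous.div ?_ ?_ ?_
  · exact (continuous_const.mul hsc).rexp
  · exact ((continuous_const.mul hsc).sub continuous_const).mul hsc
  · intro p
    have h1 : κ ≤ Real.sqrt (p ^ 2 + κ ^ 2) := sqrt_ge κ p hκ0.le
    have h2 : 0 < 2 * Real.sqrt (p ^ 2 + κ ^ 2) - α := by linarith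
    positivity

lemma integrand_integrable (hα : 0 < α) (ha : 0 < a) {κ : ℝ} (hκ : α / 2 < κ) :
    Integrable (fun p : ℝ => Real.exp (-2 * a * Real.sqrt (p ^ 2 + κ ^ 2)) /
      ((2 * Real.sqrt (p ^ 2 + κ ^ 2) - α) * Real.sqrt (p ^ 2 + κ ^ 2))) := by
  have hκ0 : 0 < κ := lt_trans (by positivity) hκ
  set f : ℝ → ℝ := fun p : ℝ => Real.exp (-2 * a * Real.sqrt (p ^ 2 + κ ^ 2)) /
      ((2 * Real.sqrt (p ^ 2 + κ ^ 2) - α) * Real.sqrt (p ^ 2 + κ ^ 2)) with hf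
  have hcont := integrand_cont (a := a) hα hκ
  refine LocallyIntegrable.integrable_of_isBigO_atTop_of_norm_isNegInvariant
    (hcont.locallyIntegrable) ?_ (g := fun p => Real.exp (-(2 * a) * p)) ?_ ?_
  · filter_upwards with p
    simp [hf, neg_pow]
  · rw [Asymptotics.isBigO_iff]
    refine ⟨1 / ((2 * κ - α) * κ), ?_⟩
    filter_upwards [eventually_ge_atTop (0:ℝ)] with p hp
    have h1 : κ ≤ Real.sqrt (p ^ 2 + κ ^ 2) := sqrt_ge κ p hκ0.le
    have h2 : 0 < 2 * Real.sqrt (p ^ 2 + κ ^ 2) - α := by linarith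
    have h3 : 0 < Real.sqrt (p ^ 2 + κ ^ 2) := lt_of_lt_of_le hκ0 h1
    have habs : p ≤ Real.sqrt (p ^ 2 + κ ^ 2) := le_trans (le_abs_self p) (sqrt_ge_abs κ p)
    have hnum : Real.exp (-2 * a * Real.sqrt (p ^ 2 + κ ^ 2)) ≤ Real.exp (-(2 * a) * p) := by
      apply Real.exp_le_exp.2
      nlinarith
    have hden : (2 * κ - α) * κ ≤ (2 * Real.sqrt (p ^ 2 + κ ^ 2) - α) * Real.sqrt (p ^ 2 + κ ^ 2) := by
      nlinarith
    have hdpos : (0:ℝ) < (2 * κ - α) * κ := by nlinarith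
    rw [Real.norm_eq_abs, Real.norm_eq_abs, abs_of_pos (Real.exp_pos _),
      abs_of_pos (show (0:ℝ) < f p by rw [hf]; positivity)]
    have key : f p ≤ Real.exp (-(2 * a) * p) / ((2 * κ - α) * κ) := by
      rw [hf]
      exact div_le_div₀ (Real.exp_pos _).le hnum hdpos hden
    calc f p ≤ Real.exp (-(2 * a) * p) / ((2 * κ - α) * κ) := key
      _ = 1 / ((2 * κ - α) * κ) * Real.exp (-(2 * a) * p) := by ring
  · exact ⟨Ioi 0, Ioi_mem_atTop 0, exp_neg_integrableOn_Ioi 0 (by positivity)⟩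

end aux

theorem stmt2 (α a : ℝ) (hα : 0 < α) (ha : 0 < a) :
    StrictAntiOn (fun κ => phiA α a κ) (Set.Ioi (α / 2)) := by
  intro κ₁ h₁ κ₂ h₂ h12
  rw [mem_Ioi] at h₁ h₂
  have hκ₁ : 0 < κ₁ := lt_trans (by positivity) h₁
  have hκ₂ : 0 < κ₂ := lt_trans (by positivity) h₂
  set f₁ : ℝ → ℝ := fun p => Real.exp (-2 * a * Real.sqrt (p ^ 2 + κ₁ ^ 2)) /
      ((2 * Real.sqrt (p ^ 2 + κ₁ ^ 2) - α) * Real.sqrt (p ^ 2 + κ₁ ^ 2)) with hf₁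
  set f₂ : ℝ → ℝ := fun p => Real.exp (-2 * a * Real.sqrt (p ^ 2 + κ₂ ^ 2)) /
      ((2 * Real.sqrt (p ^ 2 + κ₂ ^ 2) - α) * Real.sqrt (p ^ 2 + κ₂ ^ 2)) with hf₂
  have hi1 : Integrable f₁ := integrand_integrable hα ha h₁
  have hi2 : Integrable f₂ := integrand_integrable hα ha h₂
  have hlt : ∀ p : ℝ, f₂ p < f₁ p := by
    intro p
    have hs12 : Real.sqrt (p ^ 2 + κ₁ ^ 2) < Real.sqrt (p ^ 2 + κ₂ ^ 2) :=
      Real.sqrt_lt_sqrt (by positivity) (by nlinarith)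
    have hk1 : κ₁ ≤ Real.sqrt (p ^ 2 + κ₁ ^ 2) := sqrt_ge κ₁ p hκ₁.le
    have hs1 : 0 < Real.sqrt (p ^ 2 + κ₁ ^ 2) := lt_of_lt_of_le hκ₁ hk1
    have hd1 : 0 < 2 * Real.sqrt (p ^ 2 + κ₁ ^ 2) - α := by linarith
    have hden : (2 * Real.sqrt (p ^ 2 + κ₁ ^ 2) - α) * Real.sqrt (p ^ 2 + κ₁ ^ 2) ≤
        (2 * Real.sqrt (p ^ 2 + κ₂ ^ 2) - α) * Real.sqrt (p ^ 2 + κ₂ ^ 2) := by nlinarith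
    have hnum : Real.exp (-2 * a * Real.sqrt (p ^ 2 + κ₂ ^ 2)) <
        Real.exp (-2 * a * Real.sqrt (p ^ 2 + κ₁ ^ 2)) := by
      apply Real.exp_lt_exp.2
      nlinarith
    calc f₂ p ≤ Real.exp (-2 * a * Real.sqrt (p ^ 2 + κ₂ ^ 2)) /
          ((2 * Real.sqrt (p ^ 2 + κ₁ ^ 2) - α) * Real.sqrt (p ^ 2 + κ₁ ^ 2)) := by
          rw [hf₂]
          exact div_le_div_of_nonneg_left (Real.exp_pos _).le (by positivity) hden
      _ < f₁ p := by
          rw [hf₁]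
          exact (div_lt_div_iff_of_pos_right (by positivity)).2 hnum
  have hpos : 0 < ∫ p : ℝ, (f₁ p - f₂ p) := by
    rw [integral_pos_iff_support_of_nonneg (fun p => sub_nonneg.2 (hlt p).le) (hi1.sub hi2)]
    have hsupp : Function.support (fun p => f₁ p - f₂ p) = univ :=
      eq_univ_of_forall fun p => sub_ne_zero.2 (hlt p).ne'
    rw [hsupp]
    simp
  rw [integral_sub hi1 hi2] at hpos
  have hint : ∫ p : ℝ, f₂ p < ∫ p : ℝ, f₁ p := by linarith
  have hc : 0 < α / (4 * π) := by positivity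
  simp only [phiA, ← hf₁, ← hf₂]
  exact mul_lt_mul_of_pos_left hint hc
end

section
/- For fixed α > 0 and a > 0, the function φ_a(κ) = (α/(4π)) ∫_{ℝ} e^{−2a√(p²+κ²)} / ((2√(p²+κ²) − α)·√(p²+κ²)) dp tends to 0 as κ → ∞ and tends to +∞ as κ → (α/2)⁺. -/
/-!
With `s = √(p² + κ²) ≥ max κ |p|`, the integrand is at most `e^{-2a|p|} / ((2κ - α)κ)`;
this gives integrability and the decay as `κ → ∞`. Near `κ = α/2` put `ε = 2κ - α`.
On the window `p² ≤ ε` one has `s - κ = p² / (s + κ) ≤ ε / α`, so `2s - α ≤ (2/α + 1) ε`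
and the integrand is of order `1/ε`; the window has length `2√ε`, so the integral is at
least of order `1/√ε`.
-/

open Real MeasureTheory Set Filter Topology

lemma integrable_exp_neg_mul_abs {b : ℝ} (hb : 0 < b) :
    Integrable fun x : ℝ => exp (-b * |x|) := by
  rw [← integrableOn_univ, ← Iic_union_Ioi (a := 0), integrableOn_union]
  constructor
  · refine (integrableOn_exp_mul_Iic hb 0).congr_fun (fun x hx => ?_) measurableSet_Iic
    simp [abs_of_nonpos (mem_Iic.mp hx)]
  · refine (integrableOn_exp_mul_Ioi (neg_neg_of_pos hb) 0).congr_fun (fun x hx => ?_)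
      measurableSet_Ioi
    simp [abs_of_pos (mem_Ioi.mp hx)]

lemma tendsto_inv_sqrt_nhdsGT_zero : Tendsto (fun x : ℝ => (√x)⁻¹) (𝓝[>] 0) atTop := by
  simpa only [Function.comp_def, Real.sqrt_inv] using
    tendsto_sqrt_atTop.comp tendsto_inv_nhdsGT_zero

noncomputable def phiIntegrand (α a κ p : ℝ) : ℝ :=
  exp (-2 * a * √(p ^ 2 + κ ^ 2)) / ((2 * √(p ^ 2 + κ ^ 2) - α) * √(p ^ 2 + κ ^ 2))

lemma phiA_eq (α a κ : ℝ) : phiA α a κ = α / (4 * π) * ∫ p, phiIntegrand α a κ p := rfl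

section

variable {α a κ : ℝ}

lemma phiIntegrand_nonneg (hκ : α / 2 < κ) (p : ℝ) : 0 ≤ phiIntegrand α a κ p := by
  have hs : |κ| ≤ √(p ^ 2 + κ ^ 2) := Real.abs_le_sqrt (by nlinarith)
  have hκ_abs := le_abs_self κ
  exact div_nonneg (exp_nonneg _) (mul_nonneg (by linarith) (Real.sqrt_nonneg _))

lemma phiIntegrand_le (ha : 0 ≤ a) (hκ0 : 0 < κ) (hκ : α / 2 < κ) (p : ℝ) :
    phiIntegrand α a κ p ≤ ((2 * κ - α) * κ)⁻¹ * exp (-(2 * a) * |p|) := by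
  have hsκ : κ ≤ √(p ^ 2 + κ ^ 2) := Real.le_sqrt_of_sq_le (by nlinarith)
  have hsp : |p| ≤ √(p ^ 2 + κ ^ 2) := Real.abs_le_sqrt (by nlinarith)
  rw [phiIntegrand, div_eq_inv_mul]
  refine mul_le_mul (inv_anti₀ (mul_pos (by linarith) hκ0) ?_) (exp_le_exp.mpr ?_)
    (exp_nonneg _) (inv_nonneg.mpr (mul_pos (by linarith) hκ0).le)
  · exact mul_le_mul (by linarith) hsκ hκ0.le (by linarith)
  · nlinarith

lemma continuous_phiIntegrand (hκ0 : 0 < κ) (hκ : α / 2 < κ) :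
    Continuous (phiIntegrand α a κ) := by
  have hs : Continuous fun p : ℝ => √(p ^ 2 + κ ^ 2) := by fun_prop
  refine (by fun_prop : Continuous fun p => exp (-2 * a * √(p ^ 2 + κ ^ 2))).div
    (by fun_prop) fun p => ?_
  have hsκ : κ ≤ √(p ^ 2 + κ ^ 2) := Real.le_sqrt_of_sq_le (by nlinarith)
  exact (mul_pos (by linarith) (by linarith)).ne'

lemma integrable_phiIntegrand (ha : 0 < a) (hκ0 : 0 < κ) (hκ : α / 2 < κ) :
    Integrable (phiIntegrand α a κ) := by
  refine ((integrable_exp_neg_mul_abs (by positivity : 0 < 2 * a)).const_mul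
    ((2 * κ - α) * κ)⁻¹).mono' (continuous_phiIntegrand hκ0 hκ).aestronglyMeasurable
    (Eventually.of_forall fun p => ?_)
  rw [Real.norm_of_nonneg (phiIntegrand_nonneg hκ p)]
  exact phiIntegrand_le ha.le hκ0 hκ p

lemma tendsto_integral_phiIntegrand_atTop (ha : 0 < a) :
    Tendsto (fun κ => ∫ p, phiIntegrand α a κ p) atTop (𝓝 0) := by
  have hexp := integrable_exp_neg_mul_abs (by positivity : 0 < 2 * a)
  have hden : Tendsto (fun κ : ℝ => (2 * κ - α) * κ) atTop atTop :=
    (tendsto_atTop_add_const_right _ _ (tendsto_id.const_mul_atTop two_pos)).atTop_mul_atTop₀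
      tendsto_id
  have hbound := (tendsto_inv_atTop_zero.comp hden).mul_const (∫ p : ℝ, exp (-(2 * a) * |p|))
  rw [zero_mul] at hbound
  refine tendsto_of_tendsto_of_tendsto_of_le_of_le' tendsto_const_nhds hbound ?_ ?_ <;>
    filter_upwards [eventually_gt_atTop (max 0 (α / 2))] with κ hκ <;>
    obtain ⟨hκ0, hκ⟩ := max_lt_iff.mp hκ
  · exact integral_nonneg (phiIntegrand_nonneg hκ)
  · rw [Function.comp_apply, ← integral_const_mul]
    exact integral_mono (integrable_phiIntegrand ha hκ0 hκ) (hexp.const_mul _)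
      (phiIntegrand_le ha.le hκ0 hκ)

/-- `(α + 3) / 2` bounds `√(p² + κ²)` on the window, since there `κ ≤ (α + 1) / 2`. -/
lemma phiIntegrand_ge_of_sq_le (hα : 0 < α) (ha : 0 ≤ a) (hκ : α / 2 < κ)
    (hκ1 : 2 * κ - α ≤ 1) {p : ℝ} (hp : p ^ 2 ≤ 2 * κ - α) :
    exp (-(a * (α + 3))) / ((2 / α + 1) * ((α + 3) / 2)) / (2 * κ - α) ≤
      phiIntegrand α a κ p := by
  have hs2 : √(p ^ 2 + κ ^ 2) ^ 2 = p ^ 2 + κ ^ 2 := Real.sq_sqrt (by positivity)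
  have hsκ : κ ≤ √(p ^ 2 + κ ^ 2) := Real.le_sqrt_of_sq_le (by nlinarith)
  set s := √(p ^ 2 + κ ^ 2)
  have hsM : s ≤ (α + 3) / 2 := by nlinarith
  have hgap : 2 * s - α ≤ (2 / α + 1) * (2 * κ - α) := by
    have : α * (s - κ) ≤ 2 * κ - α := by nlinarith
    rw [div_add_one hα.ne', div_mul_eq_mul_div, le_div_iff₀ hα]
    nlinarith
  have hden : (2 * s - α) * s ≤ (2 / α + 1) * ((α + 3) / 2) * (2 * κ - α) :=
    calc (2 * s - α) * s ≤ ((2 / α + 1) * (2 * κ - α)) * ((α + 3) / 2) :=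
          mul_le_mul hgap hsM (by linarith) (mul_pos (by positivity) (by linarith)).le
      _ = (2 / α + 1) * ((α + 3) / 2) * (2 * κ - α) := by ring
  rw [div_div]
  exact div_le_div₀ (exp_nonneg _) (exp_le_exp.mpr (by nlinarith))
    (mul_pos (by linarith) (by linarith)) hden

lemma exists_pos_div_sqrt_le_integral_phiIntegrand (hα : 0 < α) (ha : 0 < a) :
    ∃ c > 0, ∀ κ, α / 2 < κ → 2 * κ - α ≤ 1 →
      c / √(2 * κ - α) ≤ ∫ p, phiIntegrand α a κ p := by
  refine ⟨2 * (exp (-(a * (α + 3))) / ((2 / α + 1) * ((α + 3) / 2))), by positivity,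
    fun κ hκ hκ1 => ?_⟩
  set m := exp (-(a * (α + 3))) / ((2 / α + 1) * ((α + 3) / 2))
  have hε : 0 < 2 * κ - α := by linarith
  set δ := √(2 * κ - α)
  have hδ : 0 < δ := Real.sqrt_pos.mpr hε
  have hδ2 : δ ^ 2 = 2 * κ - α := Real.sq_sqrt hε.le
  have hint := integrable_phiIntegrand ha (by linarith) hκ
  calc 2 * m / δ = ∫ _ in Icc (-δ) δ, m / (2 * κ - α) := by
        rw [setIntegral_const, Real.volume_real_Icc_of_le (by linarith), smul_eq_mul, ← hδ2]
        field_simp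
        ring
    _ ≤ ∫ p in Icc (-δ) δ, phiIntegrand α a κ p :=
        setIntegral_mono_on (integrableOn_const measure_Icc_lt_top.ne) hint.integrableOn
          measurableSet_Icc fun p hp =>
            phiIntegrand_ge_of_sq_le hα ha.le hκ hκ1 (hδ2 ▸ sq_le_sq' hp.1 hp.2)
    _ ≤ ∫ p, phiIntegrand α a κ p :=
        setIntegral_le_integral hint (Eventually.of_forall (phiIntegrand_nonneg hκ))

lemma tendsto_integral_phiIntegrand_nhdsGT (hα : 0 < α) (ha : 0 < a) :
    Tendsto (fun κ => ∫ p, phiIntegrand α a κ p) (𝓝[>] (α / 2)) atTop := by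
  obtain ⟨c, hc, hle⟩ := exists_pos_div_sqrt_le_integral_phiIntegrand hα ha
  have hε : Tendsto (fun κ : ℝ => 2 * κ - α) (𝓝[>] (α / 2)) (𝓝[>] 0) := by
    refine tendsto_nhdsWithin_of_tendsto_nhds_of_eventually_within _ ?_ ?_
    · exact ((by fun_prop : Continuous fun κ : ℝ => 2 * κ - α).tendsto' _ _
        (show 2 * (α / 2) - α = 0 by ring)).mono_left nhdsWithin_le_nhds
    · filter_upwards [self_mem_nhdsWithin] with κ (hκ : α / 2 < κ)
      simp only [mem_Ioi]
      linarith
  refine tendsto_atTop_mono' _ ?_ ((tendsto_inv_sqrt_nhdsGT_zero.comp hε).const_mul_atTop hc)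
  filter_upwards [Ioo_mem_nhdsGT (show α / 2 < α / 2 + 1 / 2 by linarith)] with κ ⟨hκ, hκ1⟩
  simpa only [Function.comp_apply, div_eq_mul_inv] using hle κ hκ (by linarith)

end

theorem stmt4 (α a : ℝ) (hα : 0 < α) (ha : 0 < a) :
    Tendsto (fun κ => phiA α a κ) atTop (𝓝 0) ∧
    Tendsto (fun κ => phiA α a κ) (𝓝[>] (α / 2)) atTop := by
  simp only [phiA_eq]
  constructor
  · simpa only [mul_zero] using (tendsto_integral_phiIntegrand_atTop ha).const_mul (α / (4 * π))
  · exact (tendsto_integral_phiIntegrand_nhdsGT hα ha).const_mul_atTop (by positivity)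
end

section
/- For any α > 0, β ∈ ℝ, and a > 0, the equation š_β(κ) − φ_a(κ) = 0 has exactly one solution κ_a in the interval (α/2, ∞), where š_β(κ) = β + (1/(2π))(log(κ/2) + γ) and φ_a(κ) = (α/(4π)) ∫_{ℝ} e^{−2a√(p²+κ²)} / ((2√(p²+κ²) − α)·√(p²+κ²)) dp. -/
open Real MeasureTheory Set Filter Topology

/-!
`sBeta β` is strictly increasing and tends to `∞`, while `phiA α a` is continuous and antitone on
`(α/2, ∞)` (dominated convergence, with the bound `e^{-2a|p|}`) and blows up like `(2κ - α)^{-1/2}`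
at the threshold: on the window `p² ≤ 2κ - α` the factor `2√(p² + κ²) - α` of the denominator is
of order `2κ - α`. Hence `sBeta β - phiA α a` maps `(α/2, ∞)` strictly increasingly and
continuously onto `ℝ`, and has exactly one zero there.
-/

theorem StrictMonoOn.existsUnique_mem_Ioi_eq {α δ : Type*} [ConditionallyCompleteLinearOrder α]
    [TopologicalSpace α] [OrderTopology α] [DenselyOrdered α] [NoMaxOrder α]
    [LinearOrder δ] [TopologicalSpace δ] [OrderClosedTopology δ]
    {f : α → δ} {c : α} (hmono : StrictMonoOn f (Ioi c)) (hcont : ContinuousOn f (Ioi c))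
    (hbot : Tendsto f (𝓝[>] c) atBot) (htop : Tendsto f atTop atTop) (y : δ) :
    ∃! x, x ∈ Ioi c ∧ f x = y := by
  obtain ⟨x₁, hfx₁, hx₁⟩ :=
    ((hbot.eventually (eventually_le_atBot y)).and self_mem_nhdsWithin).exists
  obtain ⟨x₂, hfx₂, hx₂⟩ :=
    ((htop.eventually (eventually_ge_atTop y)).and (eventually_gt_atTop c)).exists
  obtain ⟨x, hx, hfx⟩ := hcont.surjOn_Icc hx₁ hx₂ ⟨hfx₁, hfx₂⟩
  exact ⟨x, ⟨hx, hfx⟩, fun z ⟨hz, hfz⟩ => hmono.injOn hz hx (hfz.trans hfx.symm)⟩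

lemma sBeta_strictMonoOn (β : ℝ) : StrictMonoOn (sBeta β) (Ioi 0) := by
  intro κ₁ h₁ κ₂ _ h₁₂
  have := Real.log_lt_log (half_pos h₁) (by linarith : κ₁ / 2 < κ₂ / 2)
  unfold sBeta
  gcongr

lemma continuousOn_sBeta (β : ℝ) : ContinuousOn (sBeta β) (Ioi 0) := by
  unfold sBeta
  exact continuousOn_const.add (continuousOn_const.mul (((continuousOn_id.div_const 2).log
    fun κ hκ => (half_pos hκ).ne').add continuousOn_const))

lemma tendsto_sBeta_atTop (β : ℝ) : Tendsto (sBeta β) atTop atTop := by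
  unfold sBeta
  refine tendsto_atTop_add_const_left _ _ (Tendsto.const_mul_atTop (by positivity) ?_)
  exact tendsto_atTop_add_const_right _ _
    (tendsto_log_atTop.comp (tendsto_id.atTop_div_const two_pos))

noncomputable def phiAProfile (α a s : ℝ) : ℝ := exp (-2 * a * s) / ((2 * s - α) * s)

lemma phiA_eq_integral_phiAProfile (α a κ : ℝ) :
    phiA α a κ = α / (4 * π) * ∫ p : ℝ, phiAProfile α a √(p ^ 2 + κ ^ 2) := rfl

section Profile

variable {α a s : ℝ}

lemma phiAProfile_denom_pos (hα : 0 ≤ α) (hs : α / 2 < s) : 0 < (2 * s - α) * s :=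
  mul_pos (by linarith) (by linarith)

lemma phiAProfile_pos (hα : 0 ≤ α) (hs : α / 2 < s) : 0 < phiAProfile α a s :=
  div_pos (exp_pos _) (phiAProfile_denom_pos hα hs)

lemma phiAProfile_le {c t : ℝ} (hα : 0 ≤ α) (ha : 0 ≤ a) (hc : α / 2 < c) (hcs : c ≤ s)
    (hts : t ≤ s) : phiAProfile α a s ≤ exp (-2 * a * t) / ((2 * c - α) * c) :=
  div_le_div₀ (exp_pos _).le (exp_le_exp.2 (by nlinarith)) (phiAProfile_denom_pos hα hc)
    (by nlinarith)

lemma phiAProfile_antitoneOn (hα : 0 ≤ α) (ha : 0 ≤ a) :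
    AntitoneOn (phiAProfile α a) (Ioi (α / 2)) :=
  fun _ hs _ _ hst => phiAProfile_le hα ha hs hst hst

lemma continuousOn_phiAProfile (hα : 0 ≤ α) : ContinuousOn (phiAProfile α a) (Ioi (α / 2)) := by
  unfold phiAProfile
  exact ContinuousOn.div (by fun_prop) (by fun_prop) fun s hs => (phiAProfile_denom_pos hα hs).ne'

end Profile

lemma integrable_exp_mul_abs {c : ℝ} (hc : c < 0) : Integrable fun p : ℝ => exp (c * |p|) := by
  have hIic : IntegrableOn (fun p : ℝ => exp (c * |p|)) (Iic 0) :=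
    (integrableOn_exp_mul_Iic (neg_pos.2 hc) 0).congr_fun
      (fun p hp => by simp [abs_of_nonpos (mem_Iic.1 hp)]) measurableSet_Iic
  have hIoi : IntegrableOn (fun p : ℝ => exp (c * |p|)) (Ioi 0) :=
    (integrableOn_exp_mul_Ioi hc 0).congr_fun (fun p hp => by rw [abs_of_pos hp]) measurableSet_Ioi
  simpa using hIic.union hIoi

lemma le_sqrt_sq_add_sq (p κ : ℝ) : κ ≤ √(p ^ 2 + κ ^ 2) :=
  (le_abs_self κ).trans (Real.abs_le_sqrt (le_add_of_nonneg_left (sq_nonneg p)))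

lemma abs_le_sqrt_sq_add_sq (p κ : ℝ) : |p| ≤ √(p ^ 2 + κ ^ 2) :=
  Real.abs_le_sqrt (le_add_of_nonneg_right (sq_nonneg κ))

section Integrand

variable {α a κ : ℝ}

lemma phiAProfile_sqrt_le {c : ℝ} (hα : 0 ≤ α) (ha : 0 ≤ a) (hc : α / 2 < c) (hcκ : c ≤ κ)
    (p : ℝ) : phiAProfile α a √(p ^ 2 + κ ^ 2) ≤ exp (-2 * a * |p|) / ((2 * c - α) * c) :=
  phiAProfile_le hα ha hc (hcκ.trans (le_sqrt_sq_add_sq p κ)) (abs_le_sqrt_sq_add_sq p κ)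

lemma continuous_phiAProfile_sqrt (hα : 0 ≤ α) (hκ : α / 2 < κ) :
    Continuous fun p => phiAProfile α a √(p ^ 2 + κ ^ 2) :=
  (continuousOn_phiAProfile hα).comp_continuous (by fun_prop)
    fun p => hκ.trans_le (le_sqrt_sq_add_sq p κ)

lemma integrable_phiAProfile_sqrt (hα : 0 ≤ α) (ha : 0 < a) (hκ : α / 2 < κ) :
    Integrable fun p => phiAProfile α a √(p ^ 2 + κ ^ 2) :=
  ((integrable_exp_mul_abs (by linarith : -2 * a < 0)).div_const _).mono'
    (continuous_phiAProfile_sqrt hα hκ).aestronglyMeasurable <| ae_of_all _ fun p => by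
      rw [norm_of_nonneg (phiAProfile_pos hα (hκ.trans_le (le_sqrt_sq_add_sq p κ))).le]
      exact phiAProfile_sqrt_le hα ha.le hκ le_rfl p

end Integrand

section PhiA

variable {α a : ℝ}

lemma phiA_antitoneOn (hα : 0 ≤ α) (ha : 0 < a) : AntitoneOn (phiA α a) (Ioi (α / 2)) := by
  intro κ₁ h₁ κ₂ h₂ h₁₂
  rw [phiA_eq_integral_phiAProfile, phiA_eq_integral_phiAProfile]
  refine mul_le_mul_of_nonneg_left (integral_mono (integrable_phiAProfile_sqrt hα ha h₂)
    (integrable_phiAProfile_sqrt hα ha h₁) fun p => ?_) (by positivity)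
  have h₁pos : 0 ≤ κ₁ := by linarith [mem_Ioi.1 h₁]
  exact phiAProfile_antitoneOn hα ha.le (h₁.trans_le (le_sqrt_sq_add_sq p κ₁))
    (mem_Ioi.1 h₁ |>.trans_le <| h₁₂.trans (le_sqrt_sq_add_sq p κ₂))
    (Real.sqrt_le_sqrt (by gcongr))

lemma continuousOn_phiA (hα : 0 ≤ α) (ha : 0 < a) : ContinuousOn (phiA α a) (Ioi (α / 2)) := by
  intro κ₀ hκ₀
  obtain ⟨c, hc, hcκ₀⟩ := exists_between (mem_Ioi.1 hκ₀)
  rw [funext (phiA_eq_integral_phiAProfile α a)]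
  refine ContinuousAt.continuousWithinAt <| ContinuousAt.const_mul
    (continuousAt_of_dominated (bound := fun p => exp (-2 * a * |p|) / ((2 * c - α) * c)) ?_ ?_
      ((integrable_exp_mul_abs (by linarith : -2 * a < 0)).div_const _) ?_) _
  · filter_upwards [Ioi_mem_nhds hcκ₀] with κ hκ
    exact (continuous_phiAProfile_sqrt hα (hc.trans hκ)).aestronglyMeasurable
  · filter_upwards [Ioi_mem_nhds hcκ₀] with κ hκ
    refine ae_of_all _ fun p => ?_
    rw [norm_of_nonneg (phiAProfile_pos hα ((hc.trans hκ).trans_le (le_sqrt_sq_add_sq p κ))).le]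
    exact phiAProfile_sqrt_le hα ha.le hc hκ.le p
  · refine ae_of_all _ fun p => ?_
    have hcont := (continuousOn_phiAProfile (a := a) hα).continuousAt
      (Ioi_mem_nhds ((mem_Ioi.1 hκ₀).trans_le (le_sqrt_sq_add_sq p κ₀)))
    exact hcont.comp (f := fun κ => √(p ^ 2 + κ ^ 2)) (by fun_prop)

end PhiA

section Threshold

variable {α a κ : ℝ}

-- `α + 1 + 1 / α` bounds `√(p ^ 2 + κ ^ 2)` on the window.
lemma phiAProfile_sqrt_ge {p : ℝ} (hα : 0 < α) (ha : 0 ≤ a) (hκ : α / 2 < κ)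
    (hκ₁ : 2 * κ - α ≤ 1) (hp : p ^ 2 ≤ 2 * κ - α) :
    exp (-2 * a * (α + 1 + 1 / α)) / ((2 / α + 1) * (α + 1 + 1 / α)) / (2 * κ - α) ≤
      phiAProfile α a √(p ^ 2 + κ ^ 2) := by
  set F := √(p ^ 2 + κ ^ 2)
  set ε := 2 * κ - α
  have hκF : κ ≤ F := le_sqrt_sq_add_sq p κ
  have hFsq : F ^ 2 = p ^ 2 + κ ^ 2 := Real.sq_sqrt (by positivity)
  have hFκ : F - κ ≤ ε / α := by
    rw [le_div_iff₀ hα]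
    nlinarith
  have h2F : 2 * F - α ≤ (2 / α + 1) * ε := by
    have : (2 / α + 1) * ε = 2 * (ε / α) + ε := by ring
    linarith
  have hFM : F ≤ α + 1 + 1 / α := by
    have : ε / α ≤ 1 / α := div_le_div_of_nonneg_right hκ₁ hα.le
    linarith
  unfold phiAProfile
  rw [div_div]
  refine div_le_div₀ (exp_pos _).le (exp_le_exp.2 (by nlinarith))
    (phiAProfile_denom_pos hα.le (hκ.trans_le hκF)) ?_
  calc (2 * F - α) * F ≤ ((2 / α + 1) * ε) * (α + 1 + 1 / α) :=
        mul_le_mul h2F hFM (by linarith) (mul_nonneg (by positivity) (by linarith))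
    _ = (2 / α + 1) * (α + 1 + 1 / α) * ε := by ring

lemma exists_div_sqrt_le_phiA (hα : 0 < α) (ha : 0 < a) :
    ∃ C > 0, ∀ κ, α / 2 < κ → 2 * κ - α ≤ 1 → C / √(2 * κ - α) ≤ phiA α a κ := by
  set c := exp (-2 * a * (α + 1 + 1 / α)) / ((2 / α + 1) * (α + 1 + 1 / α))
  have hc : 0 < c := by positivity
  refine ⟨α / (4 * π) * (2 * c), by positivity, fun κ hκ hκ₁ => ?_⟩
  set ε := 2 * κ - α
  have hε : 0 < ε := by linarith
  have hsε : 0 < √ε := Real.sqrt_pos.2 hε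
  have hint := integrable_phiAProfile_sqrt hα.le ha hκ
  have hwindow : ∫ p in Icc (-√ε) √ε, c / ε = 2 * c / √ε := by
    rw [setIntegral_const, measureReal_def, Real.volume_Icc, ENNReal.toReal_ofReal (by linarith),
      smul_eq_mul]
    field_simp
    rw [Real.sq_sqrt hε.le]
    ring
  have hlower : 2 * c / √ε ≤ ∫ p, phiAProfile α a √(p ^ 2 + κ ^ 2) := by
    rw [← hwindow]
    refine (setIntegral_mono_on (integrableOn_const (by simp)) hint.integrableOn
      measurableSet_Icc fun p hp => ?_).trans (setIntegral_le_integral hint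
        (ae_of_all _ fun p => (phiAProfile_pos hα.le (hκ.trans_le (le_sqrt_sq_add_sq p κ))).le))
    exact phiAProfile_sqrt_ge hα ha.le hκ hκ₁ ((sq_le_sq' hp.1 hp.2).trans_eq (Real.sq_sqrt hε.le))
  rw [phiA_eq_integral_phiAProfile, mul_div_assoc]
  gcongr

lemma tendsto_phiA_nhdsGT (hα : 0 < α) (ha : 0 < a) :
    Tendsto (phiA α a) (𝓝[>] (α / 2)) atTop := by
  obtain ⟨C, hC, hle⟩ := exists_div_sqrt_le_phiA hα ha
  have hsqrt : Tendsto (fun κ => √(2 * κ - α)) (𝓝[>] (α / 2)) (𝓝[>] 0) := by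
    refine tendsto_nhdsWithin_of_tendsto_nhds_of_eventually_within _ ?_ ?_
    · have : Continuous fun κ => √(2 * κ - α) := by fun_prop
      have h := (this.tendsto (α / 2)).mono_left (nhdsWithin_le_nhds (s := Ioi (α / 2)))
      rwa [show 2 * (α / 2) - α = 0 by ring, Real.sqrt_zero] at h
    · filter_upwards [self_mem_nhdsWithin] with κ hκ
      exact Real.sqrt_pos.2 (by linarith [mem_Ioi.1 hκ])
  refine tendsto_atTop_mono' _ ?_ (hsqrt.inv_tendsto_nhdsGT_zero.const_mul_atTop hC)
  filter_upwards [Ioo_mem_nhdsGT (by linarith : α / 2 < α / 2 + 1 / 2)] with κ hκ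
  simpa [div_eq_mul_inv] using hle κ hκ.1 (by linarith [hκ.2])

end Threshold

theorem stmt5 (α β a : ℝ) (hα : 0 < α) (ha : 0 < a) :
    ∃! κ : ℝ, κ ∈ Set.Ioi (α / 2) ∧ sBeta β κ - phiA α a κ = 0 := by
  have hpos : Ioi (α / 2) ⊆ Ioi 0 := Ioi_subset_Ioi (by positivity)
  refine StrictMonoOn.existsUnique_mem_Ioi_eq (f := fun κ => sBeta β κ - phiA α a κ)
    ?_ ?_ ?_ ?_ 0
  · intro κ₁ h₁ κ₂ h₂ h₁₂
    have := sBeta_strictMonoOn β (hpos h₁) (hpos h₂) h₁₂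
    have := phiA_antitoneOn hα.le ha h₁ h₂ h₁₂.le
    dsimp only
    linarith
  · exact ((continuousOn_sBeta β).mono hpos).sub (continuousOn_phiA hα.le ha)
  · have hs : Tendsto (sBeta β) (𝓝[>] (α / 2)) (𝓝 (sBeta β (α / 2))) :=
      ((continuousOn_sBeta β).continuousAt (Ioi_mem_nhds (by positivity))).tendsto.mono_left
        nhdsWithin_le_nhds
    simpa only [sub_eq_add_neg] using
      hs.add_atBot (tendsto_neg_atBot_iff.2 (tendsto_phiA_nhdsGT hα ha))
  · refine tendsto_atTop_mono' _ ?_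
      ((tendsto_sBeta_atTop β).atTop_add (tendsto_const_nhds (x := -phiA α a α)))
    filter_upwards [eventually_ge_atTop α] with κ hκ
    have := phiA_antitoneOn hα.le ha (show α / 2 < α by linarith) (show α / 2 < κ by linarith) hκ
    linarith
end

section
/- For any α > 0, β ∈ ℝ, and a > 0, the equation β + κ/(4π) − ψ_a(κ) = 0, where ψ_a(κ) = (α/π) ∫₀^∞ p · e^{−2a√(p²+κ²)} / ((2√(p²+κ²) − α)·√(p²+κ²)) dp, has exactly one solution κ_a in (α/2, ∞). -/
open Real MeasureTheory Set Filter Topology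

/-!
The substitution `t = √(p² + κ²)` turns `ψ_a(κ)` into `(α/π) ∫_κ^∞ e^{-2at} / (2t - α) dt`.
As a function of `κ > α/2` this tail integral is differentiable with derivative minus the
(positive) integrand, hence continuous and strictly decreasing; and it diverges logarithmically
as `κ → α/2⁺`, since on `(κ, T]` the integrand dominates `e^{-2aT} / (2t - α)`. So
`κ ↦ β + κ/(4π) - ψ_a(κ)` is continuous and strictly increasing on `(α/2, ∞)`, tends to `-∞` at
`α/2` and to `+∞` at `∞`, and vanishes exactly once.
-/

lemma existsUnique_mem_Ioi_eq_of_tendsto {g : ℝ → ℝ} {c : ℝ} (v : ℝ)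
    (hcont : ContinuousOn g (Ioi c)) (hmono : StrictMonoOn g (Ioi c))
    (hbot : Tendsto g (𝓝[>] c) atBot) (htop : Tendsto g atTop atTop) :
    ∃! x, x ∈ Ioi c ∧ g x = v := by
  obtain ⟨x, hxv, hx⟩ :=
    ((hbot.eventually (eventually_lt_atBot v)).and self_mem_nhdsWithin).exists
  obtain ⟨y, hyv, hxy⟩ :=
    ((htop.eventually (eventually_gt_atTop v)).and (eventually_gt_atTop x)).exists
  obtain ⟨z, hz, hzv⟩ := intermediate_value_Ioo hxy.le
    (hcont.mono fun t ht => hx.trans_le ht.1) ⟨hxv, hyv⟩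
  have hzc : z ∈ Ioi c := hx.trans hz.1
  exact ⟨z, ⟨hzc, hzv⟩, fun w ⟨hw, hwv⟩ => hmono.injOn hw hzc (hwv.trans hzv.symm)⟩

lemma hasDerivAt_setIntegral_Ioi {E : Type*} [NormedAddCommGroup E] [NormedSpace ℝ E]
    [CompleteSpace E] {f : ℝ → E} {m κ : ℝ} (hf : IntegrableOn f (Ioi m)) (hmκ : m < κ)
    (hmeas : StronglyMeasurableAtFilter f (𝓝 κ)) (hcont : ContinuousAt f κ) :
    HasDerivAt (fun u => ∫ t in Ioi u, f t) (-f κ) κ := by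
  have hprim : HasDerivAt (fun u => ∫ t in m..u, f t) (f κ) κ :=
    intervalIntegral.integral_hasDerivAt_right
      ((intervalIntegrable_iff_integrableOn_Ioc_of_le hmκ.le).2
        (hf.mono_set Ioc_subset_Ioi_self)) hmeas hcont
  refine (hprim.const_sub (∫ t in Ioi m, f t)).congr_of_eventuallyEq ?_
  filter_upwards [Ioi_mem_nhds hmκ] with u hu
  rw [← intervalIntegral.integral_Ioi_sub_Ioi hf (le_of_lt hu), sub_sub_cancel]

lemma setIntegral_Ioi_comp_sqrt_sq_add_sq {E : Type*} [NormedAddCommGroup E] [NormedSpace ℝ E]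
    {κ : ℝ} (hκ : 0 < κ) (h : ℝ → E) :
    ∫ p in Ioi 0, (p / √(p ^ 2 + κ ^ 2)) • h √(p ^ 2 + κ ^ 2) = ∫ t in Ioi κ, h t := by
  have hpos : ∀ p : ℝ, 0 < p ^ 2 + κ ^ 2 := fun p => by positivity
  have hderiv : ∀ p ∈ Ioi (0 : ℝ), HasDerivWithinAt (fun p => √(p ^ 2 + κ ^ 2))
      (p / √(p ^ 2 + κ ^ 2)) (Ioi 0) p := by
    intro p _
    have := ((hasDerivAt_pow 2 p).add_const (κ ^ 2)).sqrt (hpos p).ne'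
    refine (this.congr_deriv ?_).hasDerivWithinAt
    rw [Nat.cast_ofNat, pow_one, mul_div_mul_left _ _ two_ne_zero]
  have hmono : StrictMonoOn (fun p => √(p ^ 2 + κ ^ 2)) (Ioi 0) := fun p hp q _ hpq =>
    sqrt_lt_sqrt (hpos p).le (by gcongr; exact hp.le)
  have himage : (fun p => √(p ^ 2 + κ ^ 2)) '' Ioi 0 = Ioi κ := by
    ext t
    constructor
    · rintro ⟨p, hp, rfl⟩
      calc κ = √(κ ^ 2) := (sqrt_sq hκ.le).symm
        _ < √(p ^ 2 + κ ^ 2) := sqrt_lt_sqrt (sq_nonneg κ) (by nlinarith [mem_Ioi.1 hp])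
    · intro (ht : κ < t)
      have hsub : 0 < t ^ 2 - κ ^ 2 := by nlinarith
      refine ⟨√(t ^ 2 - κ ^ 2), sqrt_pos.2 hsub, ?_⟩
      dsimp only
      rw [sq_sqrt hsub.le, sub_add_cancel, sqrt_sq (hκ.trans ht).le]
  rw [← himage, integral_image_eq_integral_abs_deriv_smul measurableSet_Ioi hderiv hmono.injOn]
  refine setIntegral_congr_fun measurableSet_Ioi fun p hp => ?_
  rw [abs_of_nonneg (div_nonneg (le_of_lt hp) (sqrt_nonneg _))]

lemma integral_inv_two_mul_sub {α x T : ℝ} (hx : α / 2 < x) (hT : α / 2 < T) :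
    ∫ t in x..T, (2 * t - α)⁻¹ = log ((2 * T - α) / (2 * x - α)) / 2 := by
  rw [intervalIntegral.integral_comp_mul_sub (fun t => t⁻¹) two_ne_zero,
    integral_inv_of_pos (by linarith) (by linarith), smul_eq_mul]
  ring

section Psi

variable {α a : ℝ}

noncomputable def psiKernel (α a t : ℝ) : ℝ := exp (-2 * t * a) / (2 * t - α)

lemma psiKernel_pos {t : ℝ} (ht : α / 2 < t) : 0 < psiKernel α a t :=
  div_pos (exp_pos _) (by linarith)

lemma continuousOn_psiKernel : ContinuousOn (psiKernel α a) (Ioi (α / 2)) :=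
  fun t (ht : α / 2 < t) => by
    unfold psiKernel
    exact (ContinuousAt.div (by fun_prop) (by fun_prop) (by linarith)).continuousWithinAt

lemma integrableOn_psiKernel (ha : 0 < a) {κ : ℝ} (hκ : α / 2 < κ) :
    IntegrableOn (psiKernel α a) (Ioi κ) := by
  refine ((exp_neg_integrableOn_Ioi κ (by linarith : 0 < 2 * a)).const_mul (2 * κ - α)⁻¹).mono'
    ((continuousOn_psiKernel.mono (Ioi_subset_Ioi hκ.le)).aestronglyMeasurable measurableSet_Ioi) ?_
  filter_upwards [self_mem_ae_restrict measurableSet_Ioi] with t (ht : κ < t)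
  rw [norm_of_nonneg (psiKernel_pos (hκ.trans ht)).le, psiKernel, div_eq_inv_mul,
    show -2 * t * a = -(2 * a) * t by ring]
  exact mul_le_mul_of_nonneg_right (inv_anti₀ (by linarith) (by linarith)) (exp_pos _).le

lemma psiA_eq_psiC {κ : ℝ} (hκ : 0 < κ) : psiA α a κ = psiC α a κ := by
  rw [psiA, psiC, ← setIntegral_Ioi_comp_sqrt_sq_add_sq hκ]
  congr 1
  refine setIntegral_congr_fun measurableSet_Ioi fun p _ => ?_
  rw [smul_eq_mul, mul_right_comm (-2 : ℝ) a, div_mul_div_comm, mul_comm (2 * _ - α)]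

lemma hasDerivAt_psiC (ha : 0 < a) {κ : ℝ} (hκ : α / 2 < κ) :
    HasDerivAt (psiC α a) (-(α / π * psiKernel α a κ)) κ := by
  -- `psiKernel` is not integrable near `α / 2`, so compare with the tail from a point below `κ`.
  have hm : α / 2 < (α / 2 + κ) / 2 := by linarith
  have := hasDerivAt_setIntegral_Ioi (integrableOn_psiKernel ha hm) (by linarith)
    ((continuousOn_psiKernel.mono (Ioi_subset_Ioi hm.le)).stronglyMeasurableAtFilter isOpen_Ioi
      κ (by rw [mem_Ioi]; linarith))
    (continuousOn_psiKernel.continuousAt (Ioi_mem_nhds hκ))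
  rw [← mul_neg]
  exact this.const_mul (α / π)

lemma strictAntiOn_psiC (hα : 0 < α) (ha : 0 < a) : StrictAntiOn (psiC α a) (Ioi (α / 2)) :=
  strictAntiOn_of_hasDerivWithinAt_neg (convex_Ioi _)
    (fun _ hκ => (hasDerivAt_psiC ha hκ).continuousAt.continuousWithinAt)
    (fun _ hκ => (hasDerivAt_psiC ha (interior_subset hκ)).hasDerivWithinAt)
    (fun _ hκ => neg_neg_of_pos (mul_pos (div_pos hα pi_pos) (psiKernel_pos (interior_subset hκ))))

lemma exp_mul_log_le_setIntegral_psiKernel (ha : 0 < a) {x T : ℝ} (hx : α / 2 < x)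
    (hxT : x ≤ T) :
    exp (-2 * T * a) * (log ((2 * T - α) / (2 * x - α)) / 2) ≤
      ∫ t in Ioi x, psiKernel α a t := by
  have hsub : uIcc x T ⊆ Ioi (α / 2) := by
    rw [uIcc_of_le hxT]
    exact fun t ht => hx.trans_le ht.1
  have hinv : ContinuousOn (fun t => (2 * t - α)⁻¹) (uIcc x T) :=
    ContinuousOn.inv₀ (by fun_prop) fun t ht => by linarith [mem_Ioi.1 (hsub ht)]
  calc exp (-2 * T * a) * (log ((2 * T - α) / (2 * x - α)) / 2)
      = ∫ t in x..T, exp (-2 * T * a) * (2 * t - α)⁻¹ := by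
        rw [intervalIntegral.integral_const_mul, integral_inv_two_mul_sub hx (hx.trans_le hxT)]
    _ ≤ ∫ t in x..T, psiKernel α a t := by
        refine intervalIntegral.integral_mono_on hxT
          (continuousOn_const.mul hinv).intervalIntegrable
          (continuousOn_psiKernel.mono hsub).intervalIntegrable fun t ht => ?_
        rw [psiKernel, div_eq_mul_inv]
        exact mul_le_mul_of_nonneg_right (exp_le_exp.2 (by nlinarith [ht.2]))
          (inv_nonneg.2 (by linarith [ht.1]))
    _ = ∫ t in Ioc x T, psiKernel α a t := intervalIntegral.integral_of_le hxT
    _ ≤ ∫ t in Ioi x, psiKernel α a t :=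
        setIntegral_mono_set (integrableOn_psiKernel ha hx)
          ((ae_restrict_iff' measurableSet_Ioi).2 <| .of_forall fun t ht =>
            (psiKernel_pos (hx.trans ht)).le)
          Ioc_subset_Ioi_self.eventuallyLE

lemma tendsto_psiC_nhdsGT (hα : 0 < α) (ha : 0 < a) :
    Tendsto (psiC α a) (𝓝[>] (α / 2)) atTop := by
  set T := (α + 1) / 2
  have hT : α / 2 < T := by simp only [T]; linarith
  have hT1 : 2 * T - α = 1 := by simp only [T]; ring
  have hshift : Tendsto (fun x => 2 * x - α) (𝓝[>] (α / 2)) (𝓝[>] 0) :=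
    tendsto_nhdsWithin_of_tendsto_nhds_of_eventually_within _
      ((Continuous.tendsto' (by fun_prop) _ _ (by ring)).mono_left nhdsWithin_le_nhds)
      (eventually_nhdsWithin_of_forall fun x (hx : α / 2 < x) => by simp only [mem_Ioi]; linarith)
  have hlog : Tendsto (fun x => log ((2 * T - α) / (2 * x - α))) (𝓝[>] (α / 2)) atTop := by
    simp only [hT1, one_div]
    exact tendsto_log_atTop.comp (tendsto_inv_nhdsGT_zero.comp hshift)
  refine tendsto_atTop_mono' _ ?_
    (((hlog.atTop_div_const two_pos).const_mul_atTop (exp_pos (-2 * T * a))).const_mul_atTop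
      (div_pos hα pi_pos))
  filter_upwards [Ioo_mem_nhdsGT hT] with x hx
  exact mul_le_mul_of_nonneg_left (exp_mul_log_le_setIntegral_psiKernel ha hx.1 hx.2.le)
    (div_pos hα pi_pos).le

end Psi

theorem stmt15 (α β a : ℝ) (hα : 0 < α) (ha : 0 < a) :
    ∃! κ : ℝ, κ ∈ Set.Ioi (α / 2) ∧ β + κ / (4 * π) - psiA α a κ = 0 := by
  let g : ℝ → ℝ := fun κ => β + κ / (4 * π) - psiC α a κ
  have h4π : 0 < 4 * π := by positivity
  have hlin : Continuous fun κ : ℝ => β + κ / (4 * π) := by fun_prop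
  have hanti := strictAntiOn_psiC hα ha
  have hmono : StrictMonoOn g (Ioi (α / 2)) := fun x hx y hy hxy => by
    have : x / (4 * π) < y / (4 * π) := by gcongr
    linarith [hanti hx hy hxy]
  have hcont : ContinuousOn g (Ioi (α / 2)) :=
    hlin.continuousOn.sub fun κ hκ => (hasDerivAt_psiC ha hκ).continuousAt.continuousWithinAt
  have hbot : Tendsto g (𝓝[>] (α / 2)) atBot := by
    simp only [g, sub_eq_add_neg]
    exact ((hlin.tendsto _).mono_left nhdsWithin_le_nhds).add_atBot
      (tendsto_neg_atTop_atBot.comp (tendsto_psiC_nhdsGT hα ha))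
  have htop : Tendsto g atTop atTop := by
    refine tendsto_atTop_mono' _ ?_ (tendsto_atTop_add_const_right _ (β - psiC α a (α / 2 + 1))
      (tendsto_id.atTop_div_const h4π))
    filter_upwards [eventually_ge_atTop (α / 2 + 1)] with κ hκ
    have := hanti.antitoneOn (by simp : α / 2 + 1 ∈ Ioi (α / 2))
      (show κ ∈ Ioi (α / 2) by rw [mem_Ioi]; linarith) hκ
    simp only [id, g]
    linarith
  refine (existsUnique_congr fun κ => and_congr_right fun (hκ : α / 2 < κ) => ?_).2
    (existsUnique_mem_Ioi_eq_of_tendsto 0 hcont hmono hbot htop)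
  rw [psiA_eq_psiC (by linarith)]
end

section
/- Let α > 0, β ∈ ℝ, and for each a > 0 let κ_a ∈ (α/2, ∞) be the unique solution of β + κ/(4π) = ψ_a(κ) with ψ_a(κ) = (α/π) ∫_κ^∞ e^{−2ta}/(2t−α) dt. If β < 0 and 4π|β| > α/2, then κ_a → 4π|β| as a → ∞; if β ≥ 0 or 4π|β| ≤ α/2, then κ_a → α/2 as a → ∞. -/
open Real MeasureTheory Set Filter Topology

lemma psiC_nonneg (α a κ : ℝ) (hα : 0 < α) (hκ : α / 2 < κ) : 0 ≤ psiC α a κ := by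
  apply mul_nonneg (by positivity)
  apply setIntegral_nonneg measurableSet_Ioi
  intro t ht
  have : α / 2 < t := lt_trans hκ ht
  have : 0 < 2 * t - α := by linarith
  positivity

lemma psiC_le (α a κ : ℝ) (hα : 0 < α) (ha : 0 < a) (hκ : α / 2 < κ) :
    psiC α a κ ≤ (α / π) * ((2 * a)⁻¹ * (2 * κ - α)⁻¹) := by
  have hκ0 : 0 < κ := lt_trans (by positivity) hκ
  have hden : 0 < 2 * κ - α := by linarith
  have hg : IntegrableOn (fun t : ℝ => Real.exp (-(2 * a) * t) * (2 * κ - α)⁻¹) (Ioi κ) :=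
    (exp_neg_integrableOn_Ioi κ (by positivity)).mul_const _
  have h2 : (∫ t in Set.Ioi κ, Real.exp (-2 * t * a) / (2 * t - α))
      ≤ ∫ t in Set.Ioi κ, Real.exp (-(2 * a) * t) * (2 * κ - α)⁻¹ := by
    apply integral_mono_of_nonneg
    · filter_upwards [self_mem_ae_restrict (measurableSet_Ioi (a := κ))] with t ht
      have h1 : 0 < 2 * t - α := by have := lt_trans hκ ht; linarith
      positivity
    · exact hg
    · filter_upwards [self_mem_ae_restrict (measurableSet_Ioi (a := κ))] with t ht
      have ht' : κ < t := ht
      have h1 : 0 < 2 * t - α := by linarith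
      have : Real.exp (-2 * t * a) = Real.exp (-(2 * a) * t) := by ring_nf
      rw [this, div_eq_mul_inv]
      apply mul_le_mul_of_nonneg_left _ (Real.exp_nonneg _)
      exact inv_anti₀ hden (by linarith)
  have h3 : (∫ t in Set.Ioi κ, Real.exp (-(2 * a) * t) * (2 * κ - α)⁻¹)
      = (∫ t in Set.Ioi κ, Real.exp (-(2 * a) * t)) * (2 * κ - α)⁻¹ :=
    integral_mul_const _ _
  have h4 : (∫ t in Set.Ioi κ, Real.exp (-(2 * a) * t)) = (2 * a)⁻¹ * Real.exp (-(2 * a * κ)) := by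
    have := MeasureTheory.integral_comp_mul_left_Ioi (fun x => Real.exp (-x)) κ
      (b := 2 * a) (by positivity)
    simp only [smul_eq_mul] at this
    rw [show (fun t : ℝ => Real.exp (-(2 * a) * t)) = fun t => Real.exp (-(2 * a * t)) by
      funext t; ring_nf]
    calc (∫ t in Set.Ioi κ, Real.exp (-(2 * a * t)))
        = (2 * a)⁻¹ * ∫ x in Set.Ioi (2 * a * κ), Real.exp (-x) := this
      _ = (2 * a)⁻¹ * Real.exp (-(2 * a * κ)) := by rw [integral_exp_neg_Ioi]
  have h5 : Real.exp (-(2 * a * κ)) ≤ 1 :=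
    Real.exp_le_one_iff.mpr (by nlinarith)
  have : (∫ t in Set.Ioi κ, Real.exp (-2 * t * a) / (2 * t - α))
      ≤ (2 * a)⁻¹ * (2 * κ - α)⁻¹ := by
    calc _ ≤ _ := h2
      _ = (2 * a)⁻¹ * Real.exp (-(2 * a * κ)) * (2 * κ - α)⁻¹ := by rw [h3, h4]
      _ ≤ (2 * a)⁻¹ * 1 * (2 * κ - α)⁻¹ := by
          apply mul_le_mul_of_nonneg_right _ (by positivity)
          exact mul_le_mul_of_nonneg_left h5 (by positivity)
      _ = (2 * a)⁻¹ * (2 * κ - α)⁻¹ := by ring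
  unfold psiC
  exact mul_le_mul_of_nonneg_left this (by positivity)

lemma key_tendsto (α β L : ℝ) (hα : 0 < α) (hL : α / 2 ≤ L) (hβL : 0 ≤ β + L / (4 * π))
    (κ_ : ℝ → ℝ)
    (hκ : ∀ a : ℝ, 0 < a →
      κ_ a ∈ Set.Ioi (α / 2) ∧ β + κ_ a / (4 * π) = psiC α a (κ_ a))
    (hlow : ∀ a : ℝ, 0 < a → L ≤ κ_ a) :
    Tendsto κ_ atTop (𝓝 L) := by
  have hπ : (0:ℝ) < π := Real.pi_pos
  rw [Metric.tendsto_atTop]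
  intro ε hε
  refine ⟨max 1 (α / ε ^ 2 + 1), fun a ha => ?_⟩
  have ha1 : (1:ℝ) ≤ a := le_trans (le_max_left _ _) ha
  have ha0 : 0 < a := by linarith
  have haε : α / ε ^ 2 + 1 ≤ a := le_trans (le_max_right _ _) ha
  obtain ⟨hmem, heq⟩ := hκ a ha0
  have hmem' : α / 2 < κ_ a := hmem
  have hlow' := hlow a ha0
  have hub : κ_ a < L + ε := by
    by_contra hcon
    push_neg at hcon
    have h1 : ε / (4 * π) ≤ β + κ_ a / (4 * π) := by
      have hdiv : (L + ε) / (4 * π) ≤ κ_ a / (4 * π) := by gcongr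
      rw [add_div] at hdiv
      have : ε / (4 * π) - L / (4 * π) ≤ κ_ a / (4 * π) - 2 * (L / (4 * π)) := by linarith
      linarith
    have h2 := psiC_le α a (κ_ a) hα ha0 hmem'
    have h3 : (2 * κ_ a - α)⁻¹ ≤ (2 * ε)⁻¹ := by
      apply inv_anti₀ (by positivity)
      linarith
    have h4 : psiC α a (κ_ a) ≤ (α / π) * ((2 * a)⁻¹ * (2 * ε)⁻¹) := by
      refine le_trans h2 ?_
      apply mul_le_mul_of_nonneg_left _ (by positivity)
      exact mul_le_mul_of_nonneg_left h3 (by positivity)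
    have h5 : (α / π) * ((2 * a)⁻¹ * (2 * ε)⁻¹) < ε / (4 * π) := by
      have haα : α / ε ^ 2 < a := by linarith
      have hkey : α < ε ^ 2 * a := by
        rw [div_lt_iff₀ (by positivity)] at haα
        linarith [haα]
      have heqq : (α / π) * ((2 * a)⁻¹ * (2 * ε)⁻¹) = α / (4 * π * a * ε) := by
        field_simp
        ring_nf
      rw [heqq, div_lt_div_iff₀ (by positivity) (by positivity)]
      nlinarith [hπ]
    rw [← heq] at h4
    linarith
  rw [Real.dist_eq, abs_lt]
  constructor <;> linarith

theorem stmt17 (α β : ℝ) (hα : 0 < α) (κ_ : ℝ → ℝ)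
    (hκ : ∀ a : ℝ, 0 < a →
      κ_ a ∈ Set.Ioi (α / 2) ∧ β + κ_ a / (4 * π) = psiC α a (κ_ a) ∧
      ∀ κ' ∈ Set.Ioi (α / 2), β + κ' / (4 * π) = psiC α a κ' → κ' = κ_ a) :
    (β < 0 ∧ α / 2 < 4 * π * |β| → Tendsto κ_ atTop (𝓝 (4 * π * |β|))) ∧
    ((0 ≤ β ∨ 4 * π * |β| ≤ α / 2) → Tendsto κ_ atTop (𝓝 (α / 2))) := by
  have hπ : (0:ℝ) < π := Real.pi_pos
  have h4π : (0:ℝ) < 4 * π := by positivity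
  constructor
  · rintro ⟨hβ, hαβ⟩
    have habs : |β| = -β := abs_of_neg hβ
    apply key_tendsto α β (4 * π * |β|) hα (le_of_lt hαβ)
    · rw [habs]
      rw [mul_div_cancel_left₀ (-β) h4π.ne']
      linarith
    · exact fun a ha => ⟨(hκ a ha).1, (hκ a ha).2.1⟩
    · intro a ha
      obtain ⟨hmem, heq, _⟩ := hκ a ha
      have hpos : 0 ≤ psiC α a (κ_ a) := psiC_nonneg α a _ hα hmem
      rw [← heq] at hpos
      have : -β ≤ κ_ a / (4 * π) := by linarith
      rw [le_div_iff₀ h4π] at this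
      rw [habs]; linarith
  · intro h
    apply key_tendsto α β (α / 2) hα le_rfl
    · rcases h with h | h
      · have : 0 < α / 2 / (4 * π) := by positivity
        linarith
      · have hβabs : -|β| ≤ β := neg_abs_le β
        have : |β| ≤ α / 2 / (4 * π) := by
          rw [le_div_iff₀ h4π]; linarith
        linarith
    · exact fun a ha => ⟨(hκ a ha).1, (hκ a ha).2.1⟩
    · exact fun a ha => le_of_lt (hκ a ha).1
end
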